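/- The radius 1/√3 is best possible for the majorization comparison between odd analytic functions: for every r with 1/√3 < r < 1 there exist odd analytic functions f, g on the open unit disk D with |g(z)| ≤ |f(z)| for all z ∈ D and M_g(r) > M_f(r). (One may take f(z) = z and g(z) = g_a(z) := z(z²−a)/(1−az²) with a ∈ [0,1) close to 1.) -/

import Mathlib

open Metric

/-- The majorant series `M_F(r) = ∑ |A_n| r^n` of an analytic function
`F(z) = ∑ A_n z^n` on the unit disk, where `A_n = F⁽ⁿ⁾(0)/n!`. -/
noncomputable def majorant (F : ℂ → ℂ) (r : ℝ) : ℝ :=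
  ∑' n : ℕ, ‖iteratedDeriv n F 0 / n.factorial‖ * r ^ n

/-- `g` is subordinate to `f` on the unit disk: `g = f ∘ φ` for some analytic
self-map `φ` of the unit disk with `φ 0 = 0`. -/
def Subordinate (g f : ℂ → ℂ) : Prop :=
  ∃ φ : ℂ → ℂ, AnalyticOnNhd ℂ φ (ball 0 1) ∧ φ 0 = 0 ∧
    Set.MapsTo φ (ball 0 1) (ball 0 1) ∧ Set.EqOn g (f ∘ φ) (ball 0 1)

/-!
Take `f = id` and `g_a(z) = z B_a(z²)` with the Blaschke factor `B_a(w) = (w - a) / (1 - a w)`,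
`0 ≤ a < 1`. As `B_a` maps the disk into itself, `|g_a(z)| ≤ |z|`. Expanding
`B_a(w) = -a + (1 - a²) ∑ aᵏ wᵏ⁺¹` gives `M_{g_a}(r) = r (a + (1 - a²) r² / (1 - a r²))`, and
`M_{g_a}(r) - r = (1 - a) r ((1 + 2a) r² - 1) / (1 - a r²)`. This is positive once
`(1 + 2a) r² > 1`, and such an `a < 1` exists exactly when `r > 1/√3`.
-/

open FormalMultilinearSeries NNReal

section PowerSeries

variable {F : ℂ → ℂ} {c : ℕ → ℂ} {R : ℝ≥0}

lemma hasFPowerSeriesOnBall_ofScalars_of_hasSum (hR : 0 < R)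
    (hF : ∀ z ∈ ball (0 : ℂ) R, HasSum (fun n ↦ c n * z ^ n) (F z)) :
    HasFPowerSeriesOnBall F (ofScalars ℂ c) 0 R where
  r_le := by
    refine ENNReal.le_of_forall_nnreal_lt fun ρ hρ ↦ (ofScalars ℂ c).le_radius_of_tendsto
      (l := 0) ?_
    have hρ' : (ρ : ℂ) ∈ ball (0 : ℂ) R := by simpa using hρ
    simpa [ofScalars_norm] using (hF _ hρ').summable.norm.tendsto_atTop_zero
  r_pos := by simpa using hR
  hasSum {z} hz := by
    rw [eball_coe] at hz
    simpa [ofScalars_apply_eq, mul_comm] using hF z hz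

lemma iteratedDeriv_div_factorial_of_hasSum (hR : 0 < R)
    (hF : ∀ z ∈ ball (0 : ℂ) R, HasSum (fun n ↦ c n * z ^ n) (F z)) (n : ℕ) :
    iteratedDeriv n F 0 / n.factorial = c n := by
  have hF' := (hasFPowerSeriesOnBall_ofScalars_of_hasSum hR hF).hasFPowerSeriesAt
  have := hF'.analyticAt.hasFPowerSeriesAt.eq_formalMultilinearSeries hF'
  exact congrFun ((ofScalars_series_eq_iff ℂ _ _).1 this) n

lemma majorant_eq_tsum_of_hasSum (hR : 0 < R)
    (hF : ∀ z ∈ ball (0 : ℂ) R, HasSum (fun n ↦ c n * z ^ n) (F z)) (r : ℝ) :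
    majorant F r = ∑' n, ‖c n‖ * r ^ n := by
  simp only [majorant, iteratedDeriv_div_factorial_of_hasSum hR hF]

lemma analyticOnNhd_of_hasSum (hR : 0 < R)
    (hF : ∀ z ∈ ball (0 : ℂ) R, HasSum (fun n ↦ c n * z ^ n) (F z)) :
    AnalyticOnNhd ℂ F (ball 0 R) := by
  simpa using (hasFPowerSeriesOnBall_ofScalars_of_hasSum hR hF).analyticOnNhd

end PowerSeries

/-- The coefficients of `z ↦ z * h (z ^ 2)` when `b` are those of `h`. -/
def oddCoeffs {α : Type*} [Zero α] (b : ℕ → α) (n : ℕ) : α :=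
  if Even n then 0 else b (n / 2)

lemma oddCoeffs_two_mul_add_one {α : Type*} [Zero α] (b : ℕ → α) (k : ℕ) :
    oddCoeffs b (2 * k + 1) = b k := by
  simp [oddCoeffs, Nat.mul_add_div]

lemma norm_oddCoeffs {α : Type*} [SeminormedAddGroup α] (b : ℕ → α) (n : ℕ) :
    ‖oddCoeffs b n‖ = oddCoeffs (‖b ·‖) n := by
  unfold oddCoeffs; split_ifs <;> simp

lemma HasSum.oddCoeffs_mul_pow {α : Type*} [CommSemiring α] [TopologicalSpace α]
    [IsTopologicalSemiring α] {b : ℕ → α} {x s : α}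
    (hb : HasSum (fun k ↦ b k * (x ^ 2) ^ k) s) :
    HasSum (fun n ↦ oddCoeffs b n * x ^ n) (x * s) := by
  have heven : HasSum (fun k ↦ oddCoeffs b (2 * k) * x ^ (2 * k)) 0 := by
    simp [oddCoeffs]
  have hodd : HasSum (fun k ↦ oddCoeffs b (2 * k + 1) * x ^ (2 * k + 1)) (x * s) := by
    have : (fun k ↦ oddCoeffs b (2 * k + 1) * x ^ (2 * k + 1)) =
        fun k ↦ x * (b k * (x ^ 2) ^ k) := by
      ext k
      rw [oddCoeffs_two_mul_add_one, pow_succ, pow_mul]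
      ring
    rw [this]
    exact hb.mul_left x
  simpa using HasSum.even_add_odd (f := fun n ↦ oddCoeffs b n * x ^ n) heven hodd

/-- The coefficients of `x ↦ u + v * x / (1 - q * x)`. -/
def mobiusCoeffs {K : Type*} [Monoid K] (u v q : K) : ℕ → K
  | 0 => u
  | k + 1 => v * q ^ k

lemma norm_mobiusCoeffs {K : Type*} [NormedDivisionRing K] (u v q : K) (k : ℕ) :
    ‖mobiusCoeffs u v q k‖ = mobiusCoeffs ‖u‖ ‖v‖ ‖q‖ k := by
  cases k <;> simp [mobiusCoeffs]

lemma hasSum_mobiusCoeffs_mul_pow {K : Type*} [NormedField K] [CompleteSpace K] (u v q : K)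
    {x : K} (hqx : ‖q * x‖ < 1) :
    HasSum (fun k ↦ mobiusCoeffs u v q k * x ^ k) (u + v * x / (1 - q * x)) := by
  rw [← hasSum_nat_add_iff' 1]
  have htail : (fun k ↦ mobiusCoeffs u v q (k + 1) * x ^ (k + 1)) =
      fun k ↦ v * x * (q * x) ^ k := by
    ext k
    simp only [mobiusCoeffs]
    ring
  have hhead : u + v * x / (1 - q * x) - ∑ i ∈ Finset.range 1, mobiusCoeffs u v q i * x ^ i =
      v * x * (1 - q * x)⁻¹ := by
    simp [mobiusCoeffs, div_eq_mul_inv]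
  rw [htail, hhead]
  exact (hasSum_geometric_of_norm_lt_one hqx).mul_left (v * x)

lemma norm_sub_le_norm_one_sub_conj_mul {a w : ℂ} (ha : ‖a‖ ≤ 1) (hw : ‖w‖ ≤ 1) :
    ‖w - a‖ ≤ ‖1 - (starRingEnd ℂ) a * w‖ := by
  have key : ‖1 - (starRingEnd ℂ) a * w‖ ^ 2 - ‖w - a‖ ^ 2 = (1 - ‖a‖ ^ 2) * (1 - ‖w‖ ^ 2) := by
    simp only [← Complex.normSq_eq_norm_sq, Complex.normSq_sub,
      Complex.normSq_conj, map_mul, Complex.conj_conj, map_one,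
      Complex.mul_re, Complex.conj_re, Complex.conj_im, Complex.one_re, Complex.one_im]
    ring
  have : 0 ≤ (1 - ‖a‖ ^ 2) * (1 - ‖w‖ ^ 2) :=
    mul_nonneg (by nlinarith [norm_nonneg a]) (by nlinarith [norm_nonneg w])
  exact (pow_le_pow_iff_left₀ (norm_nonneg _) (norm_nonneg _) two_ne_zero).1 (by linarith)

lemma majorant_id (r : ℝ) : majorant id r = r := by
  have hid : ∀ z ∈ ball (0 : ℂ) (1 : ℝ≥0),
      HasSum (fun n ↦ (if n = 1 then 1 else 0) * z ^ n) (id z) := fun z _ ↦ by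
    have : (fun n ↦ (if n = 1 then (1 : ℂ) else 0) * z ^ n) =
        fun n ↦ if n = 1 then z else 0 := by
      ext n
      split_ifs with h <;> simp [h]
    rw [this]
    exact hasSum_ite_eq 1 z
  rw [majorant_eq_tsum_of_hasSum one_pos hid, tsum_eq_single 1 (fun n hn ↦ by simp [hn])]
  simp

/-- The function `g_a` of the statement. -/
noncomputable def oddBlaschke (a : ℝ) (z : ℂ) : ℂ :=
  z * (z ^ 2 - a) / (1 - a * z ^ 2)

section OddBlaschke

variable {a : ℝ}

lemma oddBlaschke_neg (a : ℝ) (z : ℂ) : oddBlaschke a (-z) = -oddBlaschke a z := by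
  simp only [oddBlaschke, neg_sq, neg_mul, neg_div]

lemma norm_oddBlaschke_le (ha : |a| ≤ 1) {z : ℂ} (hz : ‖z‖ ≤ 1) : ‖oddBlaschke a z‖ ≤ ‖z‖ := by
  have hz2 : ‖z ^ 2‖ ≤ 1 := by
    rw [norm_pow]
    exact pow_le_one₀ (norm_nonneg z) hz
  have hblaschke := norm_sub_le_norm_one_sub_conj_mul (a := a) (by simpa using ha) hz2
  rw [Complex.conj_ofReal] at hblaschke
  rw [oddBlaschke, norm_div, norm_mul]
  exact div_le_of_le_mul₀ (norm_nonneg _) (norm_nonneg _)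
    (mul_le_mul_of_nonneg_left hblaschke (norm_nonneg z))

lemma hasSum_oddBlaschke (ha : |a| ≤ 1) {z : ℂ} (hz : ‖z‖ < 1) :
    HasSum (fun n ↦ oddCoeffs (mobiusCoeffs (-a : ℂ) (1 - a ^ 2) a) n * z ^ n)
      (oddBlaschke a z) := by
  have haz : ‖(a : ℂ) * z ^ 2‖ < 1 := by
    rw [norm_mul, norm_pow, Complex.norm_real, Real.norm_eq_abs]
    nlinarith [abs_nonneg a, norm_nonneg z]
  have hden : (1 : ℂ) - a * z ^ 2 ≠ 0 := by
    intro h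
    rw [← sub_eq_zero.1 h, norm_one] at haz
    exact haz.false
  have hg : oddBlaschke a z = z * (-a + (1 - a ^ 2) * z ^ 2 / (1 - a * z ^ 2)) := by
    rw [oddBlaschke, add_div' _ _ _ hden, mul_div_assoc]
    congr 2
    ring
  rw [hg]
  exact (hasSum_mobiusCoeffs_mul_pow (-a : ℂ) (1 - a ^ 2) a haz).oddCoeffs_mul_pow

lemma majorant_oddBlaschke (ha0 : 0 ≤ a) (ha1 : a < 1) {r : ℝ} (hr0 : 0 ≤ r) (hr1 : r < 1) :
    majorant (oddBlaschke a) r = r * (a + (1 - a ^ 2) * r ^ 2 / (1 - a * r ^ 2)) := by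
  have hg : ∀ z ∈ ball (0 : ℂ) (1 : ℝ≥0), HasSum _ (oddBlaschke a z) := fun z hz ↦
    hasSum_oddBlaschke (abs_le.2 ⟨by linarith, ha1.le⟩) (by simpa using hz)
  rw [majorant_eq_tsum_of_hasSum one_pos hg]
  have hnorm : ‖(1 : ℂ) - a ^ 2‖ = 1 - a ^ 2 := by
    rw [← Complex.ofReal_one, ← Complex.ofReal_pow, ← Complex.ofReal_sub, Complex.norm_real,
      Real.norm_of_nonneg (by nlinarith)]
  have har : ‖a * r ^ 2‖ < 1 := by
    rw [Real.norm_of_nonneg (by positivity)]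
    nlinarith
  refine ((hasSum_mobiusCoeffs_mul_pow _ _ _ har).oddCoeffs_mul_pow.congr_fun ?_).tsum_eq
  intro n
  simp [norm_oddCoeffs, norm_mobiusCoeffs, hnorm, abs_of_nonneg ha0]

lemma majorant_id_lt_majorant_oddBlaschke (ha0 : 0 ≤ a) (ha1 : a < 1) {r : ℝ} (hr0 : 0 < r)
    (hr1 : r < 1) (h : 1 < (1 + 2 * a) * r ^ 2) :
    majorant id r < majorant (oddBlaschke a) r := by
  rw [majorant_id, majorant_oddBlaschke ha0 ha1 hr0.le hr1]
  have hden : 0 < 1 - a * r ^ 2 := by nlinarith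
  have hdiff : r * (a + (1 - a ^ 2) * r ^ 2 / (1 - a * r ^ 2)) - r =
      (1 - a) * r * ((1 + 2 * a) * r ^ 2 - 1) / (1 - a * r ^ 2) := by
    rw [eq_div_iff hden.ne', sub_mul, mul_assoc, add_mul, div_mul_cancel₀ _ hden.ne']
    ring
  have : 0 < (1 - a) * r * ((1 + 2 * a) * r ^ 2 - 1) / (1 - a * r ^ 2) := by
    apply div_pos _ hden
    exact mul_pos (mul_pos (by linarith) hr0) (by linarith)
  linarith

lemma exists_one_lt_one_add_two_mul_mul_sq {r : ℝ} (hr : 1 / Real.sqrt 3 < r) :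
    ∃ a : ℝ, 0 ≤ a ∧ a < 1 ∧ 1 < (1 + 2 * a) * r ^ 2 := by
  have hr0 : 0 < r := lt_trans (by positivity) hr
  have h3 : 3⁻¹ < r ^ 2 := by
    simpa [div_pow] using pow_lt_pow_left₀ hr (by positivity) two_ne_zero
  have h3' : (r ^ 2)⁻¹ < 3 := by rwa [inv_lt_comm₀ (by positivity) (by norm_num)]
  -- `a = (1 + r⁻²) / 4` gives `(1 + 2a) r² = (3 r² + 1) / 2`
  refine ⟨(1 + (r ^ 2)⁻¹) / 4, by positivity, by linarith, ?_⟩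
  field_simp
  linarith

end OddBlaschke

/-- The radius `1/√3` is best possible for the majorization comparison between
odd analytic functions. -/
theorem majorant_odd_majorized_radius_sharp :
    ∀ r : ℝ, 1 / Real.sqrt 3 < r → r < 1 →
      ∃ f g : ℂ → ℂ, AnalyticOnNhd ℂ f (ball 0 1) ∧
        AnalyticOnNhd ℂ g (ball 0 1) ∧
        (∀ z ∈ ball (0 : ℂ) 1, f (-z) = -f z) ∧
        (∀ z ∈ ball (0 : ℂ) 1, g (-z) = -g z) ∧
        (∀ z ∈ ball (0 : ℂ) 1, ‖g z‖ ≤ ‖f z‖) ∧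
        majorant f r < majorant g r := by
  intro r hr hr1
  obtain ⟨a, ha0, ha1, hra⟩ := exists_one_lt_one_add_two_mul_mul_sq hr
  have ha : |a| ≤ 1 := abs_le.2 ⟨by linarith, ha1.le⟩
  refine ⟨id, oddBlaschke a, analyticOnNhd_id, ?_, fun z _ ↦ rfl, fun z _ ↦ oddBlaschke_neg a z,
    fun z hz ↦ norm_oddBlaschke_le ha (mem_ball_zero_iff.1 hz).le,
    majorant_id_lt_majorant_oddBlaschke ha0 ha1 (lt_trans (by positivity) hr) hr1 hra⟩
  simpa using analyticOnNhd_of_hasSum (R := 1) one_pos fun z hz ↦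
    hasSum_oddBlaschke ha (by simpa using hz)
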